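/- Consider the Glauber dynamics for the Ising model on a finite box Λ ⊂ ℤ² at any inverse temperature β with boundary condition τ, and let B₁,…,B_k be an arbitrary cover of Λ. Then the spectral gap gap_Λ^τ of the single-site heat-bath dynamics on Λ and the spectral gap gap_𝓑^τ of the block dynamics corresponding to 𝓑 = {B₁,…,B_k} satisfy gap_Λ^τ ≥ (sup_{x∈Λ} #{i : B_i ∋ x})⁻¹ · gap_𝓑^τ · inf_i inf_φ gap_{B_i}^φ, where the inner infimum ranges over all boundary conditions φ on B_i and gap_{B_i}^φ is the spectral gap of the single-site dynamics on B_i with boundary condition φ. -/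

import Mathlib

open scoped Classical

/-- Sites of the square lattice `ℤ²`. -/
abbrev Site : Type := ℤ × ℤ

/-- Nearest-neighbor adjacency in `ℤ²`. -/
def Adj (u v : Site) : Prop :=
  (u.1 - v.1).natAbs + (u.2 - v.2).natAbs = 1

instance : ∀ u v : Site, Decidable (Adj u v) := fun u v => by
  unfold Adj; infer_instance

/-- The four nearest neighbors of a site. -/
def nbrs (u : Site) : Finset Site :=
  {(u.1 + 1, u.2), (u.1 - 1, u.2), (u.1, u.2 + 1), (u.1, u.2 - 1)}

/-- The (outer) boundary `∂Λ`: sites of `ℤ² ∖ Λ` adjacent to `Λ`. -/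
def bdry (Λ : Finset Site) : Finset Site :=
  (Λ.biUnion nbrs) \ Λ

/-- The spin `±1` associated to a Boolean. -/
noncomputable def spin (b : Bool) : ℝ := if b then 1 else -1

/-- The box `⟦a+1, a+m⟧ × ⟦b+1, b+n⟧` of dimensions `m × n`. -/
noncomputable def box (a b : ℤ) (m n : ℕ) : Finset Site :=
  Finset.Icc (a + 1) (a + m) ×ˢ Finset.Icc (b + 1) (b + n)

/-- `β` times the negative Hamiltonian: `β ∑_{u∼v} σ(u)σ(v)`, with each pair having at
least one endpoint in `Λ`, boundary spins given by `τ`. -/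
noncomputable def energy (β : ℝ) (Λ : Finset Site) (τ : bdry Λ → Bool) (σ : Λ → Bool) : ℝ :=
  β * ((1 / 2) * ∑ u : Λ, ∑ v : Λ, (if Adj u.1 v.1 then spin (σ u) * spin (σ v) else 0)
    + ∑ u : Λ, ∑ v : bdry Λ, (if Adj u.1 v.1 then spin (σ u) * spin (τ v) else 0))

/-- The Gibbs measure `μ_Λ^τ` at inverse temperature `β`. -/
noncomputable def gibbs (β : ℝ) (Λ : Finset Site) (τ : bdry Λ → Bool) (σ : Λ → Bool) : ℝ :=
  Real.exp (energy β Λ τ σ) / ∑ σ' : Λ → Bool, Real.exp (energy β Λ τ σ')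

/-- Heat-bath transition rate `c(x,σ)`. -/
noncomputable def rate (β : ℝ) (Λ : Finset Site) (τ : bdry Λ → Bool) (x : Λ)
    (σ : Λ → Bool) : ℝ :=
  1 / (1 + Real.exp (-2 * β * spin (σ x) *
    ((∑ y : Λ, if Adj x.1 y.1 then spin (σ y) else 0)
      + ∑ y : bdry Λ, if Adj x.1 y.1 then spin (τ y) else 0)))

/-- The configuration `σ^x` obtained from `σ` by flipping the spin at `x`. -/
def flipAt (Λ : Finset Site) (σ : Λ → Bool) (x : Λ) : Λ → Bool :=
  Function.update σ x (!σ x)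

/-- Dirichlet form `𝓔(f)` of the heat-bath Glauber dynamics. -/
noncomputable def dirichlet (β : ℝ) (Λ : Finset Site) (τ : bdry Λ → Bool)
    (f : (Λ → Bool) → ℝ) : ℝ :=
  (1 / 2) * ∑ σ : Λ → Bool, ∑ x : Λ,
    gibbs β Λ τ σ * rate β Λ τ x σ * (f (flipAt Λ σ x) - f σ) ^ 2

/-- Variance of `f` under the Gibbs measure. -/
noncomputable def isingVar (β : ℝ) (Λ : Finset Site) (τ : bdry Λ → Bool)
    (f : (Λ → Bool) → ℝ) : ℝ :=
  ∑ σ : Λ → Bool, gibbs β Λ τ σ * (f σ - ∑ σ' : Λ → Bool, gibbs β Λ τ σ' * f σ') ^ 2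

/-- Spectral gap of the continuous-time heat-bath Glauber dynamics:
`inf` of `𝓔(f)/Var(f)` over nonconstant `f`. -/
noncomputable def gap (β : ℝ) (Λ : Finset Site) (τ : bdry Λ → Bool) : ℝ :=
  sInf {g : ℝ | ∃ f : (Λ → Bool) → ℝ, (∃ σ σ', f σ ≠ f σ') ∧
    g = dirichlet β Λ τ f / isingVar β Λ τ f}

/-- Critical inverse temperature `β_c = ½ log(1+√2)`. -/
noncomputable def betaC : ℝ := Real.log (1 + Real.sqrt 2) / 2

/-- Heat-bath block-update kernel for a block `B`: resample the spins of `Λ ∩ B` from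
the Gibbs measure conditioned on the spins outside `B`. -/
noncomputable def blockKernel (β : ℝ) (Λ : Finset Site) (τ : bdry Λ → Bool)
    (B : Finset Site) (σ σ' : Λ → Bool) : ℝ :=
  if ∀ x : Λ, (x : Site) ∉ B → σ' x = σ x then
    gibbs β Λ τ σ' /
      ∑ σ'' : Λ → Bool,
        if ∀ x : Λ, (x : Site) ∉ B → σ'' x = σ x then gibbs β Λ τ σ'' else 0
  else 0

/-- Dirichlet form `⟨-𝓛f, f⟩_{L²(μ)}` of the continuous-time block dynamics with
blocks `𝓑 i`, `i : Fin k` (each block carrying a rate-one Poisson clock). -/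
noncomputable def blockDirichlet (β : ℝ) (Λ : Finset Site) (τ : bdry Λ → Bool)
    {k : ℕ} (𝓑 : Fin k → Finset Site) (f : (Λ → Bool) → ℝ) : ℝ :=
  ∑ i : Fin k, ∑ σ : Λ → Bool,
    gibbs β Λ τ σ * f σ * (f σ - ∑ σ' : Λ → Bool, blockKernel β Λ τ (𝓑 i) σ σ' * f σ')

/-- Spectral gap of the block dynamics. -/
noncomputable def blockGap (β : ℝ) (Λ : Finset Site) (τ : bdry Λ → Bool)
    {k : ℕ} (𝓑 : Fin k → Finset Site) : ℝ :=
  sInf {g : ℝ | ∃ f : (Λ → Bool) → ℝ, (∃ σ σ', f σ ≠ f σ') ∧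
    g = blockDirichlet β Λ τ 𝓑 f / isingVar β Λ τ f}

/-!
Conditioning on the spins `o` outside a block `B ⊆ Λ`, the Gibbs measure `μ_Λ^τ` factors as the
marginal of `o` times the Gibbs measure of `B` with the boundary condition induced by `o` and `τ`,
since only the bonds touching `B` see the spins of `B`; the heat-bath rates at sites of `B` see
only those bonds too. Hence the `i`-th term of the block Dirichlet form is the `o`-average of the
block variances `Var_{B_i}^φ(f)`, each at most `𝓔_{B_i}^φ(f) / inf_{i,φ} gap_{B_i}^φ`, while the
`o`-average of `𝓔_{B_i}^φ(f)` is the part of `𝓔(f)` coming from flips in `B_i`. Summing over `i`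
counts each flip at most `sup_x #{i : x ∈ B_i}` times.
-/

namespace IsingGlauber

open Finset

section WeightedVariance

variable {ι : Type*} [Fintype ι] (p g : ι → ℝ)

theorem sum_mul_mul_sub_mean (hp : ∑ x, p x = 1) :
    ∑ x, p x * g x * (g x - ∑ y, p y * g y) = ∑ x, p x * (g x - ∑ y, p y * g y) ^ 2 := by
  set m := ∑ y, p y * g y with hm
  have key : ∀ x, p x * (g x - m) ^ 2 = p x * g x * (g x - m) - m * (p x * g x - p x * m) :=
    fun x => by ring
  rw [sum_congr rfl fun x _ => key x, sum_sub_distrib, ← mul_sum, sum_sub_distrib, ← hm,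
    ← sum_mul, hp]
  ring

theorem sum_mul_sq_sub_pos (hp : ∀ x, 0 < p x) {a b : ι} (hab : g a ≠ g b) (c : ℝ) :
    0 < ∑ x, p x * (g x - c) ^ 2 := by
  have hterm : ∀ x, g x ≠ c → 0 < p x * (g x - c) ^ 2 := fun x hx =>
    mul_pos (hp x) (sq_pos_of_ne_zero (sub_ne_zero.mpr hx))
  refine sum_pos' (fun x _ => mul_nonneg (hp x).le (sq_nonneg _)) ?_
  by_cases ha : g a = c
  · exact ⟨b, mem_univ b, hterm b fun hb => hab (ha.trans hb.symm)⟩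
  · exact ⟨a, mem_univ a, hterm a ha⟩

theorem sum_mul_sq_sub_mean_eq_zero (hp : ∑ x, p x = 1) (hg : ∀ x y, g x = g y) :
    ∑ x, p x * (g x - ∑ y, p y * g y) ^ 2 = 0 := by
  refine sum_eq_zero fun x _ => ?_
  rw [sum_congr rfl fun y _ => by rw [hg y x], ← sum_mul, hp, one_mul, sub_self]
  ring

end WeightedVariance

section RayleighQuotient

variable {α : Type*} (P : α → Prop) (D V : α → ℝ)

theorem sInf_ratio_nonneg (hD : ∀ f, 0 ≤ D f) (hV : ∀ f, P f → 0 < V f) :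
    0 ≤ sInf {g : ℝ | ∃ f, P f ∧ g = D f / V f} :=
  Real.sInf_nonneg fun _ ⟨f, hf, hg⟩ => hg ▸ div_nonneg (hD f) (hV f hf).le

theorem sInf_ratio_mul_le (hD : ∀ f, 0 ≤ D f) (hV : ∀ f, P f → 0 < V f)
    (hV₀ : ∀ f, ¬ P f → V f = 0) (f : α) :
    sInf {g : ℝ | ∃ f, P f ∧ g = D f / V f} * V f ≤ D f := by
  by_cases hf : P f
  · have hbdd : BddBelow {g : ℝ | ∃ f, P f ∧ g = D f / V f} :=
      ⟨0, fun _ ⟨f, hf, hg⟩ => hg ▸ div_nonneg (hD f) (hV f hf).le⟩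
    rw [← le_div_iff₀ (hV f hf)]
    exact csInf_le hbdd ⟨f, hf, rfl⟩
  · rw [hV₀ f hf, mul_zero]
    exact hD f

theorem le_sInf_ratio (hV : ∀ f, P f → 0 < V f) (hP : ∃ f, P f) {c : ℝ}
    (h : ∀ f, P f → c * V f ≤ D f) : c ≤ sInf {g : ℝ | ∃ f, P f ∧ g = D f / V f} := by
  obtain ⟨f₀, hf₀⟩ := hP
  refine le_csInf ⟨_, f₀, hf₀, rfl⟩ fun _ ⟨f, hf, hg⟩ => ?_
  rw [hg, le_div_iff₀ (hV f hf)]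
  exact h f hf

end RayleighQuotient

theorem iInf_iInf_le_of_nonneg {ι : Sort*} {κ : ι → Sort*} {F : ∀ i, κ i → ℝ}
    (hF : ∀ i j, 0 ≤ F i j) (i : ι) (j : κ i) : ⨅ i, ⨅ j, F i j ≤ F i j :=
  (ciInf_le ⟨0, by rintro _ ⟨i', rfl⟩; exact Real.iInf_nonneg (hF i')⟩ i).trans
    (ciInf_le ⟨0, by rintro _ ⟨j', rfl⟩; exact hF i j'⟩ j)

theorem mem_nbrs {u v : Site} : v ∈ nbrs u ↔ Adj u v := by
  simp only [nbrs, Adj, mem_insert, mem_singleton, Prod.ext_iff]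
  omega

theorem adj_comm {u v : Site} : Adj u v ↔ Adj v u := by
  unfold Adj
  omega

theorem notMem_of_mem_bdry {A : Finset Site} {v : Site} (h : v ∈ bdry A) : v ∉ A :=
  (mem_sdiff.mp h).2

theorem mem_bdry_of_adj {A : Finset Site} {u v : Site} (hu : u ∈ A) (hv : v ∉ A)
    (h : Adj u v) : v ∈ bdry A :=
  mem_sdiff.mpr ⟨mem_biUnion.mpr ⟨u, hu, mem_nbrs.mpr h⟩, hv⟩

theorem mem_bdry_of_subset {B Λ : Finset Site} (hB : B ⊆ Λ) {v : Site} (hv : v ∈ bdry B)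
    (hvΛ : v ∉ Λ) : v ∈ bdry Λ := by
  obtain ⟨u, hu, hn⟩ := mem_biUnion.mp (mem_sdiff.mp hv).1
  exact mem_sdiff.mpr ⟨mem_biUnion.mpr ⟨u, hB hu, hn⟩, hvΛ⟩

/-- Every neighbour of a site of `A` lies in exactly one of `A` and `∂A`. -/
theorem sum_adj_add_sum_adj_bdry {A : Finset Site} {x : Site} (hx : x ∈ A) (g : Site → ℝ) :
    (∑ y ∈ A, if Adj x y then g y else 0) + (∑ y ∈ bdry A, if Adj x y then g y else 0)
      = ∑ y ∈ nbrs x, g y := by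
  have hdisj : Disjoint A (bdry A) :=
    disjoint_right.mpr fun _ hv => notMem_of_mem_bdry hv
  have hnbrs : (A ∪ bdry A).filter (Adj x) = nbrs x := by
    ext y
    rw [mem_filter, mem_union, mem_nbrs]
    by_cases hy : y ∈ A
    · tauto
    · exact ⟨And.right, fun h => ⟨Or.inr (mem_bdry_of_adj hx hy h), h⟩⟩
  rw [← sum_union hdisj, ← sum_filter, hnbrs]

theorem sum_adj_bdry_of_subset {B Λ : Finset Site} (hB : B ⊆ Λ) {x : Site} (hx : x ∈ B)
    (g : Site → ℝ) :
    (∑ y ∈ bdry B, if Adj x y then g y else 0)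
      = (∑ y ∈ Λ \ B, if Adj x y then g y else 0)
        + ∑ y ∈ bdry Λ, if Adj x y then g y else 0 := by
  have hBsum := sum_adj_add_sum_adj_bdry hx g
  have hΛsum := sum_adj_add_sum_adj_bdry (hB hx) g
  rw [← sum_sdiff hB] at hΛsum
  linarith

theorem sum_sum_eq_of_subset {α : Type*} [DecidableEq α] {B Λ : Finset α} (hB : B ⊆ Λ)
    (g : α → α → ℝ) (hg : ∀ u v, g u v = g v u) :
    ∑ u ∈ Λ, ∑ v ∈ Λ, g u v
      = ∑ u ∈ B, ∑ v ∈ B, g u v + ∑ u ∈ Λ \ B, ∑ v ∈ Λ \ B, g u v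
        + 2 * ∑ u ∈ B, ∑ v ∈ Λ \ B, g u v := by
  have split : ∀ G : α → ℝ, ∑ u ∈ Λ, G u = ∑ u ∈ B, G u + ∑ u ∈ Λ \ B, G u :=
    fun G => by rw [add_comm, sum_sdiff hB]
  have cross : ∑ u ∈ Λ \ B, ∑ v ∈ B, g u v = ∑ u ∈ B, ∑ v ∈ Λ \ B, g u v := by
    rw [sum_comm]
    exact sum_congr rfl fun u _ => sum_congr rfl fun v _ => hg v u
  simp only [split, sum_add_distrib, cross]
  ring

noncomputable def pairEnergy (β : ℝ) (A C : Finset Site) (η : Site → Bool) : ℝ :=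
  β * ((1 / 2) * ∑ u ∈ A, ∑ v ∈ A, (if Adj u v then spin (η u) * spin (η v) else 0)
    + ∑ u ∈ A, ∑ v ∈ C, (if Adj u v then spin (η u) * spin (η v) else 0))

theorem pairEnergy_congr (β : ℝ) {A C : Finset Site} {η η' : Site → Bool}
    (h : ∀ v ∈ A ∪ C, η v = η' v) : pairEnergy β A C η = pairEnergy β A C η' := by
  have hA : ∀ v ∈ A, η v = η' v := fun v hv => h v (mem_union_left _ hv)
  have hsum : ∀ D : Finset Site, (∀ v ∈ D, η v = η' v) →
      ∑ u ∈ A, ∑ v ∈ D, (if Adj u v then spin (η u) * spin (η v) else 0)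
        = ∑ u ∈ A, ∑ v ∈ D, (if Adj u v then spin (η' u) * spin (η' v) else 0) :=
    fun D hD => sum_congr rfl fun u hu => sum_congr rfl fun v hv => by rw [hA u hu, hD v hv]
  rw [pairEnergy, pairEnergy, hsum A hA, hsum C fun v hv => h v (mem_union_right _ hv)]

theorem pairEnergy_split (β : ℝ) {B Λ : Finset Site} (hB : B ⊆ Λ) (η : Site → Bool) :
    pairEnergy β Λ (bdry Λ) η = pairEnergy β B (bdry B) η + pairEnergy β (Λ \ B) (bdry Λ) η := by
  set g : Site → Site → ℝ := fun u v => if Adj u v then spin (η u) * spin (η v) else 0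
  have hg : ∀ u v, g u v = g v u := fun u v => by
    simp only [g, adj_comm (u := u)]
    split_ifs <;> ring
  have hΛΛ := sum_sum_eq_of_subset hB g hg
  have hΛC : ∑ u ∈ Λ, ∑ v ∈ bdry Λ, g u v
      = ∑ u ∈ B, ∑ v ∈ bdry Λ, g u v + ∑ u ∈ Λ \ B, ∑ v ∈ bdry Λ, g u v := by
    rw [add_comm, sum_sdiff hB]
  have hBC : ∑ u ∈ B, ∑ v ∈ bdry B, g u v
      = ∑ u ∈ B, ∑ v ∈ Λ \ B, g u v + ∑ u ∈ B, ∑ v ∈ bdry Λ, g u v := by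
    rw [← sum_add_distrib]
    exact sum_congr rfl fun u hu => sum_adj_bdry_of_subset hB hu _
  simp only [pairEnergy]
  rw [hΛΛ, hΛC, hBC]
  ring

noncomputable def extend {A : Finset Site} (σ : A → Bool) (θ : bdry A → Bool) : Site → Bool :=
  fun v => if h : v ∈ A then σ ⟨v, h⟩ else if h' : v ∈ bdry A then θ ⟨v, h'⟩ else false

theorem extend_of_mem {A : Finset Site} (σ : A → Bool) (θ : bdry A → Bool) (u : A) :
    extend σ θ u = σ u := by
  simp [extend, u.2]

theorem extend_of_mem_bdry {A : Finset Site} (σ : A → Bool) (θ : bdry A → Bool)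
    (v : bdry A) : extend σ θ v = θ v := by
  simp [extend, notMem_of_mem_bdry v.2, v.2]

theorem sum_sum_coe_sort {A C : Finset Site} (G : Site → Site → ℝ) :
    ∑ u ∈ A, ∑ v ∈ C, G u v = ∑ u : A, ∑ v : C, G u v := by
  rw [← sum_coe_sort A]
  exact sum_congr rfl fun u _ => (sum_coe_sort C (G u)).symm

theorem energy_eq_pairEnergy (β : ℝ) (A : Finset Site) (θ : bdry A → Bool) (σ : A → Bool) :
    energy β A θ σ = pairEnergy β A (bdry A) (extend σ θ) := by
  rw [energy, pairEnergy, sum_sum_coe_sort, sum_sum_coe_sort]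
  simp only [extend_of_mem, extend_of_mem_bdry]

theorem rate_eq_nbrs (β : ℝ) (A : Finset Site) (θ : bdry A → Bool) (x : A) (σ : A → Bool) :
    rate β A θ x σ = 1 / (1 + Real.exp (-2 * β * spin (extend σ θ x) *
      ∑ y ∈ nbrs x, spin (extend σ θ y))) := by
  rw [← sum_adj_add_sum_adj_bdry x.2, ← sum_coe_sort A, ← sum_coe_sort (bdry A)]
  simp only [rate, extend_of_mem, extend_of_mem_bdry]


abbrev Outside (Λ B : Finset Site) : Type := {x : Λ // (x : Site) ∉ B}

noncomputable def glue {Λ B : Finset Site} (ζ : B → Bool) (o : Outside Λ B → Bool) :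
    Λ → Bool :=
  fun x => if h : (x : Site) ∈ B then ζ ⟨x, h⟩ else o ⟨x, h⟩

section Glue

variable {Λ B : Finset Site}

theorem glue_of_mem (ζ : B → Bool) (o : Outside Λ B → Bool) (x : Λ) (h : (x : Site) ∈ B) :
    glue ζ o x = ζ ⟨x, h⟩ := dif_pos h

theorem glue_of_notMem (ζ : B → Bool) (o : Outside Λ B → Bool) (x : Λ) (h : (x : Site) ∉ B) :
    glue ζ o x = o ⟨x, h⟩ := dif_neg h

noncomputable def glueEquiv (hB : B ⊆ Λ) :
    (B → Bool) × (Outside Λ B → Bool) ≃ (Λ → Bool) where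
  toFun p := glue p.1 p.2
  invFun σ := (fun y => σ ⟨y, hB y.2⟩, fun x => σ x)
  left_inv := fun ⟨ζ, o⟩ => Prod.ext (funext fun y => glue_of_mem ζ o ⟨y, hB y.2⟩ y.2)
    (funext fun x => glue_of_notMem ζ o x x.2)
  right_inv σ := funext fun x => by
    by_cases h : (x : Site) ∈ B
    · exact glue_of_mem _ _ x h
    · exact glue_of_notMem _ _ x h

theorem sum_eq_sum_glue (hB : B ⊆ Λ) (F : (Λ → Bool) → ℝ) :
    ∑ σ, F σ = ∑ o : Outside Λ B → Bool, ∑ ζ : B → Bool, F (glue ζ o) := by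
  rw [← (glueEquiv hB).sum_comp F, Fintype.sum_prod_type_right]
  rfl

theorem glue_eqOn_outside_iff (ζ ζ' : B → Bool) (o o' : Outside Λ B → Bool) :
    (∀ x : Λ, (x : Site) ∉ B → glue ζ' o' x = glue ζ o x) ↔ o' = o := by
  refine ⟨fun h => funext fun x => ?_, fun h x hx => ?_⟩
  · simpa only [glue_of_notMem _ _ _ x.2] using h x x.2
  · rw [h, glue_of_notMem _ _ _ hx, glue_of_notMem _ _ _ hx]

theorem sum_ite_eqOn_outside (hB : B ⊆ Λ) (ζ : B → Bool) (o : Outside Λ B → Bool)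
    (F : (Λ → Bool) → ℝ) :
    ∑ σ' : Λ → Bool,
        (if ∀ x : Λ, (x : Site) ∉ B → σ' x = glue ζ o x then F σ' else 0)
      = ∑ ζ' : B → Bool, F (glue ζ' o) := by
  rw [sum_eq_sum_glue hB, sum_comm]
  refine sum_congr rfl fun ζ' _ => ?_
  simp only [glue_eqOn_outside_iff, sum_ite_eq', mem_univ, if_true]

noncomputable def inducedBdry (hB : B ⊆ Λ) (τ : bdry Λ → Bool) (o : Outside Λ B → Bool) :
    bdry B → Bool :=
  fun v => if h : (v : Site) ∈ Λ then o ⟨⟨v, h⟩, notMem_of_mem_bdry v.2⟩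
    else τ ⟨v, mem_bdry_of_subset hB v.2 h⟩

theorem extend_inducedBdry (hB : B ⊆ Λ) (τ : bdry Λ → Bool) (ζ : B → Bool)
    (o : Outside Λ B → Bool) :
    ∀ v ∈ B ∪ bdry B, extend ζ (inducedBdry hB τ o) v = extend (glue ζ o) τ v := by
  intro v hv
  rcases mem_union.mp hv with hvB | hvb
  · rw [extend_of_mem ζ _ ⟨v, hvB⟩, extend_of_mem _ τ ⟨v, hB hvB⟩, glue_of_mem ζ o _ hvB]
  · rw [extend_of_mem_bdry ζ _ ⟨v, hvb⟩, inducedBdry]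
    by_cases hΛ : v ∈ Λ
    · rw [dif_pos hΛ, extend_of_mem _ τ ⟨v, hΛ⟩, glue_of_notMem ζ o _ (notMem_of_mem_bdry hvb)]
    · rw [dif_neg hΛ, extend_of_mem_bdry _ τ ⟨v, mem_bdry_of_subset hB hvb hΛ⟩]

theorem extend_glue_eqOn_outside (τ : bdry Λ → Bool) (ζ ζ' : B → Bool)
    (o : Outside Λ B → Bool) :
    ∀ v ∈ (Λ \ B) ∪ bdry Λ, extend (glue ζ' o) τ v = extend (glue ζ o) τ v := by
  intro v hv
  rcases mem_union.mp hv with hvO | hvb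
  · obtain ⟨hvΛ, hvB⟩ := mem_sdiff.mp hvO
    rw [extend_of_mem _ τ ⟨v, hvΛ⟩, extend_of_mem _ τ ⟨v, hvΛ⟩, glue_of_notMem ζ o _ hvB,
      glue_of_notMem ζ' o _ hvB]
  · rw [extend_of_mem_bdry _ τ ⟨v, hvb⟩, extend_of_mem_bdry _ τ ⟨v, hvb⟩]

/-- The bonds not touching `B` are those counted by `pairEnergy β (Λ \ B) (bdry Λ)`, which
therefore does not see `ζ'`. -/
theorem energy_glue (hB : B ⊆ Λ) (β : ℝ) (τ : bdry Λ → Bool) (ζ ζ' : B → Bool)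
    (o : Outside Λ B → Bool) :
    energy β Λ τ (glue ζ' o)
      = energy β B (inducedBdry hB τ o) ζ'
        + pairEnergy β (Λ \ B) (bdry Λ) (extend (glue ζ o) τ) := by
  rw [energy_eq_pairEnergy, pairEnergy_split β hB, energy_eq_pairEnergy,
    pairEnergy_congr β (extend_inducedBdry hB τ ζ' o),
    pairEnergy_congr β (extend_glue_eqOn_outside τ ζ ζ' o)]

end Glue

section Gibbs

variable {β : ℝ}

theorem gibbs_pos {A : Finset Site} {θ : bdry A → Bool} (σ : A → Bool) :
    0 < gibbs β A θ σ :=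
  div_pos (Real.exp_pos _) (sum_pos (fun _ _ => Real.exp_pos _) univ_nonempty)

theorem sum_gibbs {A : Finset Site} (θ : bdry A → Bool) : ∑ σ, gibbs β A θ σ = 1 := by
  simp only [gibbs, ← sum_div]
  exact div_self (sum_pos (fun _ _ => Real.exp_pos _) univ_nonempty).ne'

noncomputable def outsideMarginal (β : ℝ) {Λ : Finset Site} (τ : bdry Λ → Bool) (B : Finset Site)
    (o : Outside Λ B → Bool) : ℝ :=
  ∑ ζ : B → Bool, gibbs β Λ τ (glue ζ o)

variable {Λ B : Finset Site} (hB : B ⊆ Λ) (τ : bdry Λ → Bool)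

theorem outsideMarginal_pos (o : Outside Λ B → Bool) : 0 < outsideMarginal β τ B o :=
  sum_pos (fun _ _ => gibbs_pos _) univ_nonempty

include hB in
theorem gibbs_glue (ζ : B → Bool) (o : Outside Λ B → Bool) :
    gibbs β Λ τ (glue ζ o) = outsideMarginal β τ B o * gibbs β B (inducedBdry hB τ o) ζ := by
  set R := pairEnergy β (Λ \ B) (bdry Λ) (extend (glue ζ o) τ)
  have hE : ∀ ζ', energy β Λ τ (glue ζ' o) = energy β B (inducedBdry hB τ o) ζ' + R :=
    fun ζ' => energy_glue hB β τ ζ ζ' o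
  have hZB : 0 < ∑ ζ', Real.exp (energy β B (inducedBdry hB τ o) ζ') :=
    sum_pos (fun _ _ => Real.exp_pos _) univ_nonempty
  have hmarg : outsideMarginal β τ B o
      = (∑ ζ', Real.exp (energy β B (inducedBdry hB τ o) ζ')) * Real.exp R
        / ∑ σ', Real.exp (energy β Λ τ σ') := by
    simp only [outsideMarginal, gibbs, ← sum_div, sum_mul, hE, Real.exp_add]
  rw [hmarg, gibbs, gibbs, hE ζ, Real.exp_add]
  field_simp

theorem sum_blockKernel_glue (ζ : B → Bool) (o : Outside Λ B → Bool) (f : (Λ → Bool) → ℝ) :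
    ∑ σ', blockKernel β Λ τ B (glue ζ o) σ' * f σ'
      = ∑ ζ', gibbs β B (inducedBdry hB τ o) ζ' * f (glue ζ' o) := by
  have hmarg := sum_ite_eqOn_outside hB ζ o (gibbs β Λ τ)
  simp only [blockKernel, ite_mul, zero_mul]
  rw [hmarg, ← outsideMarginal.eq_1, sum_ite_eqOn_outside hB ζ o]
  refine sum_congr rfl fun ζ' _ => ?_
  rw [gibbs_glue hB τ ζ' o]
  field_simp [(outsideMarginal_pos τ o).ne']

end Gibbs


section SpectralGap

variable {β : ℝ} {A : Finset Site} {θ : bdry A → Bool}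

theorem isingVar_nonneg (f : (A → Bool) → ℝ) : 0 ≤ isingVar β A θ f :=
  sum_nonneg fun σ _ => mul_nonneg (gibbs_pos σ).le (sq_nonneg _)

theorem isingVar_pos {f : (A → Bool) → ℝ} (h : ∃ σ σ', f σ ≠ f σ') :
    0 < isingVar β A θ f :=
  let ⟨_, _, hf⟩ := h
  sum_mul_sq_sub_pos _ f gibbs_pos hf _

theorem isingVar_eq_zero {f : (A → Bool) → ℝ} (h : ¬ ∃ σ σ', f σ ≠ f σ') :
    isingVar β A θ f = 0 :=
  sum_mul_sq_sub_mean_eq_zero _ f (sum_gibbs θ) fun σ σ' => by_contra fun hne => h ⟨σ, σ', hne⟩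

theorem dirichlet_summand_nonneg (f : (A → Bool) → ℝ) (σ : A → Bool) (x : A) :
    0 ≤ gibbs β A θ σ * rate β A θ x σ * (f (flipAt A σ x) - f σ) ^ 2 := by
  have := gibbs_pos (β := β) (θ := θ) σ
  unfold rate
  positivity

theorem dirichlet_nonneg (f : (A → Bool) → ℝ) : 0 ≤ dirichlet β A θ f :=
  mul_nonneg (by norm_num) <| sum_nonneg fun σ _ => sum_nonneg fun x _ =>
    dirichlet_summand_nonneg f σ x

theorem gap_nonneg : 0 ≤ gap β A θ :=
  sInf_ratio_nonneg _ _ _ dirichlet_nonneg fun _ => isingVar_pos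

theorem gap_mul_isingVar_le (f : (A → Bool) → ℝ) :
    gap β A θ * isingVar β A θ f ≤ dirichlet β A θ f :=
  sInf_ratio_mul_le _ _ _ dirichlet_nonneg (fun _ => isingVar_pos) (fun _ => isingVar_eq_zero) f

theorem le_gap (hA : A.Nonempty) {c : ℝ}
    (h : ∀ f : (A → Bool) → ℝ, (∃ σ σ', f σ ≠ f σ') → c * isingVar β A θ f ≤ dirichlet β A θ f) :
    c ≤ gap β A θ := by
  obtain ⟨x, hx⟩ := hA
  refine le_sInf_ratio _ _ _ (fun _ => isingVar_pos) ?_ h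
  exact ⟨fun σ => if σ ⟨x, hx⟩ then 1 else 0, fun _ => true, fun _ => false, by simp⟩

end SpectralGap

section BlockDynamics

variable {β : ℝ} {Λ : Finset Site} (τ : bdry Λ → Bool)

theorem sum_gibbs_mul_sub_blockKernel {B : Finset Site} (hB : B ⊆ Λ) (f : (Λ → Bool) → ℝ) :
    ∑ σ, gibbs β Λ τ σ * f σ * (f σ - ∑ σ', blockKernel β Λ τ B σ σ' * f σ')
      = ∑ o, outsideMarginal β τ B o *
          isingVar β B (inducedBdry hB τ o) (fun ζ => f (glue ζ o)) := by
  rw [sum_eq_sum_glue hB]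
  refine sum_congr rfl fun o _ => ?_
  set p := gibbs β B (inducedBdry hB τ o)
  set g : (B → Bool) → ℝ := fun ζ => f (glue ζ o)
  have hterm : ∀ ζ, gibbs β Λ τ (glue ζ o) * f (glue ζ o) *
        (f (glue ζ o) - ∑ σ', blockKernel β Λ τ B (glue ζ o) σ' * f σ')
      = outsideMarginal β τ B o * (p ζ * g ζ * (g ζ - ∑ ζ', p ζ' * g ζ')) := fun ζ => by
    rw [sum_blockKernel_glue hB τ ζ o f, gibbs_glue hB τ ζ o]
    ring
  rw [sum_congr rfl fun ζ _ => hterm ζ, ← mul_sum, sum_mul_mul_sub_mean p g (sum_gibbs _)]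
  rfl

variable {k : ℕ} {𝓑 : Fin k → Finset Site} (hsub : ∀ i, 𝓑 i ⊆ Λ)
include hsub

theorem blockDirichlet_eq_sum_isingVar (f : (Λ → Bool) → ℝ) :
    blockDirichlet β Λ τ 𝓑 f
      = ∑ i, ∑ o, outsideMarginal β τ (𝓑 i) o *
          isingVar β (𝓑 i) (inducedBdry (hsub i) τ o) (fun ζ => f (glue ζ o)) :=
  sum_congr rfl fun i _ => sum_gibbs_mul_sub_blockKernel τ (hsub i) f

theorem blockDirichlet_nonneg (f : (Λ → Bool) → ℝ) : 0 ≤ blockDirichlet β Λ τ 𝓑 f := by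
  rw [blockDirichlet_eq_sum_isingVar τ hsub f]
  exact sum_nonneg fun i _ => sum_nonneg fun o _ =>
    mul_nonneg (outsideMarginal_pos τ o).le (isingVar_nonneg _)

theorem blockGap_mul_isingVar_le (f : (Λ → Bool) → ℝ) :
    blockGap β Λ τ 𝓑 * isingVar β Λ τ f ≤ blockDirichlet β Λ τ 𝓑 f :=
  sInf_ratio_mul_le _ _ _ (blockDirichlet_nonneg τ hsub) (fun _ => isingVar_pos)
    (fun _ => isingVar_eq_zero) f

end BlockDynamics


noncomputable def dirichletOn (β : ℝ) (Λ : Finset Site) (τ : bdry Λ → Bool) (B : Finset Site)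
    (f : (Λ → Bool) → ℝ) : ℝ :=
  (1 / 2) * ∑ σ, ∑ x ∈ univ.filter (fun x : Λ => (x : Site) ∈ B),
    gibbs β Λ τ σ * rate β Λ τ x σ * (f (flipAt Λ σ x) - f σ) ^ 2

section Localization

variable {β : ℝ} {Λ B : Finset Site} (hB : B ⊆ Λ) (τ : bdry Λ → Bool)
include hB

theorem rate_glue (ζ : B → Bool) (o : Outside Λ B → Bool) (y : B) :
    rate β B (inducedBdry hB τ o) y ζ = rate β Λ τ ⟨y, hB y.2⟩ (glue ζ o) := by
  have hnbrs : ∀ v ∈ nbrs y, v ∈ B ∪ bdry B := fun v hv => by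
    by_cases hvB : v ∈ B
    · exact mem_union_left _ hvB
    · exact mem_union_right _ (mem_bdry_of_adj y.2 hvB (mem_nbrs.mp hv))
  rw [rate_eq_nbrs, rate_eq_nbrs, extend_inducedBdry hB τ ζ o y (mem_union_left _ y.2),
    sum_congr rfl fun v hv => by rw [extend_inducedBdry hB τ ζ o v (hnbrs v hv)]]

theorem flipAt_glue (ζ : B → Bool) (o : Outside Λ B → Bool) (y : B) :
    flipAt Λ (glue ζ o) ⟨y, hB y.2⟩ = glue (flipAt B ζ y) o := by
  funext x
  by_cases hx : (x : Site) ∈ B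
  · simp only [flipAt, Function.update_apply, glue_of_mem _ _ _ hx, glue_of_mem ζ o ⟨y, hB y.2⟩ y.2,
      Subtype.ext_iff]
  · have hxy : x ≠ ⟨y, hB y.2⟩ := fun h => hx (h ▸ y.2)
    rw [flipAt, Function.update_of_ne hxy, glue_of_notMem _ _ _ hx, glue_of_notMem _ _ _ hx]

theorem sum_outsideMarginal_mul_dirichlet (f : (Λ → Bool) → ℝ) :
    ∑ o, outsideMarginal β τ B o * dirichlet β B (inducedBdry hB τ o) (fun ζ => f (glue ζ o))
      = dirichletOn β Λ τ B f := by
  rw [dirichletOn, sum_eq_sum_glue hB, mul_sum]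
  refine sum_congr rfl fun o _ => ?_
  rw [dirichlet, mul_left_comm, mul_sum]
  refine congrArg _ (sum_congr rfl fun ζ _ => ?_)
  rw [mul_sum]
  refine sum_bij' (fun y _ => ⟨y, hB y.2⟩) (fun x hx => ⟨x, (mem_filter.mp hx).2⟩)
    (fun y _ => mem_filter.mpr ⟨mem_univ _, y.2⟩) (fun _ _ => mem_univ _)
    (fun _ _ => rfl) (fun _ _ => rfl) fun y _ => ?_
  rw [gibbs_glue hB τ ζ o, rate_glue hB τ ζ o y, flipAt_glue hB ζ o y]
  ring

end Localization

theorem sum_dirichletOn_le {β : ℝ} {Λ : Finset Site} (τ : bdry Λ → Bool) {ι : Type*}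
    [Fintype ι] (𝓑 : ι → Finset Site) (f : (Λ → Bool) → ℝ) :
    ∑ i, dirichletOn β Λ τ (𝓑 i) f
      ≤ ((Λ.sup fun x => (univ.filter fun i => x ∈ 𝓑 i).card : ℕ) : ℝ) * dirichlet β Λ τ f := by
  set T := fun σ x => gibbs β Λ τ σ * rate β Λ τ x σ * (f (flipAt Λ σ x) - f σ) ^ 2
  calc ∑ i, dirichletOn β Λ τ (𝓑 i) f
      = (1 / 2) * ∑ σ, ∑ x : Λ, ((univ.filter fun i => (x : Site) ∈ 𝓑 i).card : ℝ) * T σ x := by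
        simp only [dirichletOn, ← mul_sum, sum_filter]
        rw [sum_comm]
        refine congrArg _ (sum_congr rfl fun σ _ => ?_)
        rw [sum_comm]
        exact sum_congr rfl fun x _ => by rw [← sum_filter, sum_const, nsmul_eq_mul]
    _ ≤ (1 / 2) * ∑ σ, ∑ x : Λ,
          ((Λ.sup fun x => (univ.filter fun i => x ∈ 𝓑 i).card : ℕ) : ℝ) * T σ x := by
        gcongr with σ _ x _
        · exact dirichlet_summand_nonneg f σ x
        · exact Finset.le_sup (f := fun x => (univ.filter fun i => x ∈ 𝓑 i).card) x.2
    _ = _ := by simp only [dirichlet, T, ← mul_sum]; ring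

theorem mul_blockDirichlet_le {β : ℝ} {Λ : Finset Site} (τ : bdry Λ → Bool) {k : ℕ}
    {𝓑 : Fin k → Finset Site} (hsub : ∀ i, 𝓑 i ⊆ Λ) {γ : ℝ}
    (hγ : ∀ i φ, γ ≤ gap β (𝓑 i) φ) (f : (Λ → Bool) → ℝ) :
    γ * blockDirichlet β Λ τ 𝓑 f
      ≤ ((Λ.sup fun x => (univ.filter fun i => x ∈ 𝓑 i).card : ℕ) : ℝ) * dirichlet β Λ τ f :=
  calc γ * blockDirichlet β Λ τ 𝓑 f
      = ∑ i, ∑ o, outsideMarginal β τ (𝓑 i) o *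
          (γ * isingVar β (𝓑 i) (inducedBdry (hsub i) τ o) (fun ζ => f (glue ζ o))) := by
        simp only [blockDirichlet_eq_sum_isingVar τ hsub f, mul_sum, mul_left_comm γ]
    _ ≤ ∑ i, ∑ o, outsideMarginal β τ (𝓑 i) o *
          dirichlet β (𝓑 i) (inducedBdry (hsub i) τ o) (fun ζ => f (glue ζ o)) := by
        gcongr with i _ o _
        · exact (outsideMarginal_pos τ o).le
        · exact (mul_le_mul_of_nonneg_right (hγ i _) (isingVar_nonneg _)).trans
            (gap_mul_isingVar_le _)
    _ = ∑ i, dirichletOn β Λ τ (𝓑 i) f :=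
        sum_congr rfl fun i _ => sum_outsideMarginal_mul_dirichlet (hsub i) τ f
    _ ≤ _ := sum_dirichletOn_le τ 𝓑 f

end IsingGlauber

open IsingGlauber in
theorem stmt5_general (β : ℝ) (Λ : Finset Site) (τ : bdry Λ → Bool)
    (k : ℕ) (𝓑 : Fin k → Finset Site)
    (hsub : ∀ i, 𝓑 i ⊆ Λ) :
    gap β Λ τ ≥
      ((Λ.sup fun x => (Finset.univ.filter fun i : Fin k => x ∈ 𝓑 i).card : ℕ) : ℝ)⁻¹
        * blockGap β Λ τ 𝓑
        * ⨅ i : Fin k, ⨅ φ : bdry (𝓑 i) → Bool, gap β (𝓑 i) φ := by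
  set χ : ℕ := Λ.sup fun x => (Finset.univ.filter fun i : Fin k => x ∈ 𝓑 i).card
  set γ := ⨅ i : Fin k, ⨅ φ : bdry (𝓑 i) → Bool, gap β (𝓑 i) φ
  have hγ : ∀ i φ, γ ≤ gap β (𝓑 i) φ := iInf_iInf_le_of_nonneg fun _ _ => gap_nonneg
  have hγ₀ : 0 ≤ γ := Real.iInf_nonneg fun _ => Real.iInf_nonneg fun _ => gap_nonneg
  rcases (Nat.cast_nonneg (α := ℝ) χ).eq_or_lt with hχ | hχ
  · rw [ge_iff_le, ← hχ, inv_zero, zero_mul, zero_mul]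
    exact gap_nonneg
  have hΛ : Λ.Nonempty := Finset.nonempty_iff_ne_empty.mpr fun h => by simp [χ, h] at hχ
  refine le_gap hΛ fun f _ => ?_
  calc (χ : ℝ)⁻¹ * blockGap β Λ τ 𝓑 * γ * isingVar β Λ τ f
      = (χ : ℝ)⁻¹ * (γ * (blockGap β Λ τ 𝓑 * isingVar β Λ τ f)) := by ring
    _ ≤ (χ : ℝ)⁻¹ * (γ * blockDirichlet β Λ τ 𝓑 f) := by
        gcongr
        exact blockGap_mul_isingVar_le τ hsub f
    _ ≤ (χ : ℝ)⁻¹ * (χ * dirichlet β Λ τ f) :=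
        mul_le_mul_of_nonneg_left (mul_blockDirichlet_le τ hsub hγ f) (by positivity)
    _ = dirichlet β Λ τ f := by field_simp

theorem stmt5 (β : ℝ) (Λ : Finset Site) (τ : bdry Λ → Bool)
    (k : ℕ) (𝓑 : Fin k → Finset Site)
    (hsub : ∀ i, 𝓑 i ⊆ Λ) (hcover : ∀ x ∈ Λ, ∃ i, x ∈ 𝓑 i) :
    gap β Λ τ ≥
      ((Λ.sup fun x => (Finset.univ.filter fun i : Fin k => x ∈ 𝓑 i).card : ℕ) : ℝ)⁻¹
        * blockGap β Λ τ 𝓑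
        * ⨅ i : Fin k, ⨅ φ : bdry (𝓑 i) → Bool, gap β (𝓑 i) φ :=
  stmt5_general β Λ τ k 𝓑 hsub
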